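/- Let p > 1, ℓ ∈ (0, p−1), and b > 0 satisfy b < (ℓ+1)/(2p) and p − 1 − (pℓ² + p(p−1)²b²)/(ℓ(ℓ+1 − 2pb)) > 0. Define φ(y) := (2b − y)^{−ℓ}. Then there exists κ > 0 such that for all y ∈ (0, b), p(p−1)φ(y) − [−2pφ'(y) + p(p−1)φ(y)]² / (4[φ''(y) − pφ'(y)]) ≥ κ. -/

import Mathlib

/-!
Put `t = 2b - y ∈ (b, 2b)`. Since `φ = t ^ (-ℓ)` is a power, `φ' = ℓ φ / t` and
`φ'' = ℓ (ℓ + 1) φ / t²`, so the expression factors as `p φ (p - 1 - Q t)` with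
`Q t = p ((p - 1) t - 2ℓ)² / (4ℓ (ℓ + 1 - p t))`. For `0 ≤ t ≤ 2b` the numerator of `Q t` is at
most `4p (ℓ² + (p - 1)² b²)` because `(u - v)² ≤ u² + v²` for `u, v ≥ 0`, and its denominator is
at least `4ℓ (ℓ + 1 - 2pb) > 0`; together with `φ ≥ (2b) ^ (-ℓ)` this gives the constant `κ`.
-/

open Filter Topology

section ConstSubRpow

variable {c r x : ℝ}

lemma hasDerivAt_const_sub_rpow (hx : x < c) :
    HasDerivAt (fun y => (c - y) ^ r) (-(r * (c - x) ^ (r - 1))) x := by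
  convert ((hasDerivAt_id' x).const_sub c).rpow_const (p := r) (Or.inl (sub_ne_zero.2 hx.ne'))
    using 1
  ring

lemma deriv_const_sub_rpow (hx : x < c) :
    deriv (fun y => (c - y) ^ r) x = -(r * (c - x) ^ (r - 1)) :=
  (hasDerivAt_const_sub_rpow hx).deriv

lemma deriv_deriv_const_sub_rpow (hx : x < c) :
    deriv (deriv fun y => (c - y) ^ r) x = r * (r - 1) * (c - x) ^ (r - 2) := by
  have hloc : deriv (fun y => (c - y) ^ r) =ᶠ[𝓝 x] fun y => -(r * (c - y) ^ (r - 1)) := by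
    filter_upwards [Iio_mem_nhds hx] with y hy using deriv_const_sub_rpow hy
  rw [hloc.deriv_eq]
  refine (((hasDerivAt_const_sub_rpow (r := r - 1) hx).const_mul r).neg).deriv.trans ?_
  rw [sub_sub, one_add_one_eq_two]
  ring

end ConstSubRpow

section PowerProfile

variable {p ℓ b c t y : ℝ}

lemma expression_const_sub_rpow_eq (hℓ : ℓ ≠ 0) (hy : y < c) (hden : ℓ + 1 - p * (c - y) ≠ 0) :
    p * (p - 1) * (c - y) ^ (-ℓ) -
        (-2 * p * deriv (fun y => (c - y) ^ (-ℓ)) y + p * (p - 1) * (c - y) ^ (-ℓ)) ^ 2 /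
          (4 * (deriv (deriv fun y => (c - y) ^ (-ℓ)) y - p * deriv (fun y => (c - y) ^ (-ℓ)) y)) =
      p * (c - y) ^ (-ℓ) *
        (p - 1 - p * ((p - 1) * (c - y) - 2 * ℓ) ^ 2 / (4 * (ℓ * (ℓ + 1 - p * (c - y))))) := by
  have ht : 0 < c - y := sub_pos.2 hy
  have hφ : 0 < (c - y) ^ (-ℓ) := Real.rpow_pos_of_pos ht _
  rw [deriv_deriv_const_sub_rpow hy, deriv_const_sub_rpow hy, Real.rpow_sub_one ht.ne',
    Real.rpow_sub ht, Real.rpow_two]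
  generalize c - y = t at *
  generalize t ^ (-ℓ) = A at *
  rw [show 4 * (-ℓ * (-ℓ - 1) * (A / t ^ 2) - p * -(-ℓ * (A / t))) =
      4 * (ℓ * (ℓ + 1 - p * t)) * A / t ^ 2 by field_simp; ring]
  field_simp
  ring

lemma quotient_le_of_le_two_mul (hp : 1 ≤ p) (hℓ : 0 < ℓ) (ht0 : 0 ≤ t) (ht : t ≤ 2 * b)
    (hpb : 2 * p * b < ℓ + 1) :
    p * ((p - 1) * t - 2 * ℓ) ^ 2 / (4 * (ℓ * (ℓ + 1 - p * t))) ≤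
      (p * ℓ ^ 2 + p * (p - 1) ^ 2 * b ^ 2) / (ℓ * (ℓ + 1 - 2 * p * b)) := by
  have hpt : 0 ≤ (p - 1) * t := mul_nonneg (by linarith) ht0
  have hpt2 : (p - 1) * t ≤ (p - 1) * (2 * b) := mul_le_mul_of_nonneg_left ht (by linarith)
  have hsq : ((p - 1) * t - 2 * ℓ) ^ 2 ≤ ((p - 1) * (2 * b)) ^ 2 + (2 * ℓ) ^ 2 := by
    nlinarith [mul_nonneg hpt hℓ.le, pow_le_pow_left₀ hpt hpt2 2]
  have hnum : p * ((p - 1) * t - 2 * ℓ) ^ 2 ≤ 4 * (p * ℓ ^ 2 + p * (p - 1) ^ 2 * b ^ 2) := by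
    nlinarith [mul_le_mul_of_nonneg_left hsq (by linarith : (0 : ℝ) ≤ p)]
  have hden : ℓ * (ℓ + 1 - 2 * p * b) ≤ ℓ * (ℓ + 1 - p * t) :=
    mul_le_mul_of_nonneg_left (by nlinarith) hℓ.le
  calc _ ≤ 4 * (p * ℓ ^ 2 + p * (p - 1) ^ 2 * b ^ 2) / (4 * (ℓ * (ℓ + 1 - 2 * p * b))) :=
        div_le_div₀ (by positivity) hnum (mul_pos four_pos (mul_pos hℓ (by linarith)))
          (by linarith)
    _ = _ := mul_div_mul_left _ _ four_ne_zero

end PowerProfile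

theorem stmt_13_general (p ℓ b : ℝ) (hp : 1 < p) (hℓ0 : 0 < ℓ)
    (hb0 : 0 < b) (hb : b < (ℓ + 1) / (2 * p))
    (hb2 : p - 1 - (p * ℓ ^ 2 + p * (p - 1) ^ 2 * b ^ 2) / (ℓ * (ℓ + 1 - 2 * p * b)) > 0) :
    ∃ κ > 0, ∀ y ∈ Set.Ioo (0 : ℝ) b,
      p * (p - 1) * (fun y : ℝ => (2 * b - y) ^ (-ℓ)) y -
          (-2 * p * deriv (fun y : ℝ => (2 * b - y) ^ (-ℓ)) y +
              p * (p - 1) * (fun y : ℝ => (2 * b - y) ^ (-ℓ)) y) ^ 2 /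
            (4 * (deriv (deriv (fun y : ℝ => (2 * b - y) ^ (-ℓ))) y -
              p * deriv (fun y : ℝ => (2 * b - y) ^ (-ℓ)) y)) ≥ κ := by
  have h2pb : 2 * p * b < ℓ + 1 := by rwa [lt_div_iff₀ (by positivity), mul_comm] at hb
  refine ⟨p * (2 * b) ^ (-ℓ) *
      (p - 1 - (p * ℓ ^ 2 + p * (p - 1) ^ 2 * b ^ 2) / (ℓ * (ℓ + 1 - 2 * p * b))),
    mul_pos (mul_pos (by positivity) (Real.rpow_pos_of_pos (by positivity) _)) hb2, ?_⟩
  rintro y ⟨hy0, hyb⟩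
  beta_reduce
  rw [expression_const_sub_rpow_eq hℓ0.ne' (by linarith) (by nlinarith)]
  have hφ0 : 0 < (2 * b - y) ^ (-ℓ) := Real.rpow_pos_of_pos (by linarith) _
  have hφ : (2 * b) ^ (-ℓ) ≤ (2 * b - y) ^ (-ℓ) :=
    Real.rpow_le_rpow_of_nonpos (by linarith) (by linarith) (by linarith)
  have hQ := quotient_le_of_le_two_mul hp.le hℓ0 (by linarith : 0 ≤ 2 * b - y) (by linarith) h2pb
  gcongr

theorem stmt_13 (p ℓ b : ℝ) (hp : 1 < p) (hℓ0 : 0 < ℓ) (hℓ : ℓ < p - 1)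
    (hb0 : 0 < b) (hb : b < (ℓ + 1) / (2 * p))
    (hb2 : p - 1 - (p * ℓ ^ 2 + p * (p - 1) ^ 2 * b ^ 2) / (ℓ * (ℓ + 1 - 2 * p * b)) > 0) :
    ∃ κ > 0, ∀ y ∈ Set.Ioo (0 : ℝ) b,
      p * (p - 1) * (fun y : ℝ => (2 * b - y) ^ (-ℓ)) y -
          (-2 * p * deriv (fun y : ℝ => (2 * b - y) ^ (-ℓ)) y +
              p * (p - 1) * (fun y : ℝ => (2 * b - y) ^ (-ℓ)) y) ^ 2 /
            (4 * (deriv (deriv (fun y : ℝ => (2 * b - y) ^ (-ℓ))) y -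
              p * deriv (fun y : ℝ => (2 * b - y) ^ (-ℓ)) y)) ≥ κ :=
  stmt_13_general p ℓ b hp hℓ0 hb0 hb hb2
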